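/- arXiv:2301.10099 — 5 statements merged into one kernel-verified Lean document; each statement's English description precedes it below -/
import Mathlib

section
/- Let X be a Banach space, M, c, α > 0, A : X → X a bounded linear operator with operator norm ‖A‖ ≤ M, and f : X → X a map with f(0) = 0 satisfying ‖f(u) − f(v)‖ ≤ c (‖u‖ + ‖v‖)^α ‖u − v‖ for all u, v ∈ X. Set r₀ := (1/2)(1/(cM))^{1/α}. If g ∈ X satisfies ‖g‖ < (1/(2M)) (1/(cM))^{1/α} (1 − 2^{−α}), then there exists a unique u ∈ X with ‖u‖ < r₀ satisfying u = A(f(u) + g). -/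
/-- **Proposition 2.5 (fixed-point core).** If `‖A‖ ≤ M`, `f(0) = 0` satisfies the local
Lipschitz estimate `‖f u - f v‖ ≤ c (‖u‖ + ‖v‖)^α ‖u - v‖`, and the datum `g` is small
enough, then `u = A (f u + g)` has a unique solution in the open ball of radius
`r₀ = (1/2) (1/(cM))^(1/α)`. -/
theorem local_wellposedness_fixed_point
    {X : Type*} [NormedAddCommGroup X] [NormedSpace ℝ X] [CompleteSpace X]
    (M c α : ℝ) (hM : 0 < M) (hc : 0 < c) (hα : 0 < α)
    (A : X →L[ℝ] X) (hA : ‖A‖ ≤ M)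
    (f : X → X) (hf0 : f 0 = 0)
    (hf : ∀ u v : X, ‖f u - f v‖ ≤ c * (‖u‖ + ‖v‖) ^ α * ‖u - v‖)
    (g : X)
    (hg : ‖g‖ < 1 / (2 * M) * (1 / (c * M)) ^ (1 / α) * (1 - (2 : ℝ) ^ (-α))) :
    ∃! u : X, ‖u‖ < (1 / 2) * (1 / (c * M)) ^ (1 / α) ∧ u = A (f u + g) := by
  have hcM : (0 : ℝ) < c * M := mul_pos hc hM
  have hcMinv : (0 : ℝ) < 1 / (c * M) := by positivity
  set R : ℝ := (1 / (c * M)) ^ (1 / α) with hR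
  have hRpos : 0 < R := Real.rpow_pos_of_pos hcMinv _
  set r₀ : ℝ := (1 / 2) * R with hr₀def
  have hr₀pos : 0 < r₀ := by positivity
  -- key rpow identity
  have hRα : R ^ α = 1 / (c * M) := by
    rw [hR, ← Real.rpow_mul hcMinv.le, one_div_mul_cancel hα.ne', Real.rpow_one]
  have htwo : (0 : ℝ) < (2 : ℝ) ^ (-α) := Real.rpow_pos_of_pos two_pos _
  have htwo1 : (2 : ℝ) ^ (-α) < 1 :=
    Real.rpow_lt_one_of_one_lt_of_neg one_lt_two (neg_neg_of_pos hα)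
  set b : ℝ := 1 - (2 : ℝ) ^ (-α) with hb
  have hbpos : 0 < b := by rw [hb]; linarith
  -- r₀ ^ α = 2 ^ (-α) / (c * M)
  have hhalf : ((1 : ℝ) / 2) ^ α = (2 : ℝ) ^ (-α) := by
    rw [Real.rpow_neg (by norm_num), one_div, Real.inv_rpow (by norm_num)]
  have hr₀α : r₀ ^ α = (2 : ℝ) ^ (-α) * (1 / (c * M)) := by
    rw [hr₀def, Real.mul_rpow (by norm_num) hRpos.le, hRα, hhalf]
  have hcr₀α : c * r₀ ^ α = (2 : ℝ) ^ (-α) / M := by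
    rw [hr₀α]; field_simp
  -- the small datum bound, restated
  have hg' : M * ‖g‖ < b * r₀ := by
    calc M * ‖g‖ < M * (1 / (2 * M) * R * b) := by
          exact (mul_lt_mul_iff_right₀ hM).mpr hg
      _ = b * r₀ := by rw [hr₀def]; field_simp
  set s : ℝ := M * ‖g‖ / b with hs
  have hs0 : 0 ≤ s := by positivity
  have hsr₀ : s < r₀ := by
    rw [hs, div_lt_iff₀ hbpos]; nlinarith
  set r : ℝ := (s + r₀) / 2 with hrdef
  have hrpos : 0 < r := by positivity
  have hrr₀ : r < r₀ := by rw [hrdef]; linarith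
  have hsr : s ≤ r := by rw [hrdef]; linarith
  have hMg : M * ‖g‖ ≤ b * r := by
    have h1 : M * ‖g‖ = b * s := by rw [hs]; field_simp
    rw [h1]; exact (mul_le_mul_iff_right₀ hbpos).mpr hsr
  -- norm of f u
  have hfu : ∀ u : X, ‖f u‖ ≤ c * ‖u‖ ^ α * ‖u‖ := by
    intro u
    simpa [hf0] using hf u 0
  -- invariance of the closed ball of radius r
  have hinv : ∀ u : X, ‖u‖ ≤ r → ‖A (f u + g)‖ ≤ r := by
    intro u hu
    have h2 : ‖f u‖ ≤ (2 : ℝ) ^ (-α) / M * r := by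
      calc ‖f u‖ ≤ c * ‖u‖ ^ α * ‖u‖ := hfu u
        _ ≤ c * r₀ ^ α * r := by
            apply mul_le_mul _ hu (norm_nonneg u) (by positivity)
            exact mul_le_mul_of_nonneg_left
              (Real.rpow_le_rpow (norm_nonneg u) (hu.trans hrr₀.le) hα.le) hc.le
        _ = (2 : ℝ) ^ (-α) / M * r := by rw [hcr₀α]
    calc ‖A (f u + g)‖ ≤ ‖A‖ * ‖f u + g‖ := A.le_opNorm _
      _ ≤ M * (‖f u‖ + ‖g‖) := by
          apply mul_le_mul hA (norm_add_le _ _) (norm_nonneg _) hM.le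
      _ ≤ M * ((2 : ℝ) ^ (-α) / M * r + ‖g‖) := by nlinarith
      _ = (2 : ℝ) ^ (-α) * r + M * ‖g‖ := by field_simp
      _ ≤ (2 : ℝ) ^ (-α) * r + b * r := by linarith
      _ = r := by rw [hb]; ring
  -- Lipschitz estimate on the ball
  set k : ℝ := M * c * (2 * r) ^ α with hk
  have hknn : 0 ≤ k := by
    have : (0:ℝ) ≤ (2 * r) ^ α := Real.rpow_nonneg (by positivity) _
    positivity
  have hk1 : k < 1 := by
    have h2r : (2 * r) ^ α < (2 * r₀) ^ α :=
      Real.rpow_lt_rpow (by positivity) (by linarith) hα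
    have h2r₀ : (2 * r₀) ^ α = 1 / (c * M) := by
      rw [hr₀def]
      have : 2 * ((1:ℝ) / 2 * R) = R := by ring
      rw [this, hRα]
    have : k < M * c * (1 / (c * M)) := by
      rw [hk, ← h2r₀]
      exact (mul_lt_mul_iff_right₀ (by positivity)).mpr h2r
    calc k < M * c * (1 / (c * M)) := this
      _ = 1 := by field_simp
  have hlip : ∀ u v : X, ‖u‖ ≤ r → ‖v‖ ≤ r →
      ‖A (f u + g) - A (f v + g)‖ ≤ k * ‖u - v‖ := by
    intro u v hu hv
    have heq : A (f u + g) - A (f v + g) = A (f u - f v) := by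
      rw [← map_sub]; congr 1; abel
    rw [heq]
    calc ‖A (f u - f v)‖ ≤ ‖A‖ * ‖f u - f v‖ := A.le_opNorm _
      _ ≤ M * (c * (‖u‖ + ‖v‖) ^ α * ‖u - v‖) := by
          apply mul_le_mul hA (hf u v) (norm_nonneg _) hM.le
      _ ≤ M * (c * (2 * r) ^ α * ‖u - v‖) := by
          have hpow : (‖u‖ + ‖v‖) ^ α ≤ (2 * r) ^ α :=
            Real.rpow_le_rpow (by positivity) (by linarith) hα.le
          have h1 : c * (‖u‖ + ‖v‖) ^ α * ‖u - v‖ ≤ c * (2 * r) ^ α * ‖u - v‖ := by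
            apply mul_le_mul_of_nonneg_right _ (norm_nonneg _)
            exact mul_le_mul_of_nonneg_left hpow hc.le
          exact mul_le_mul_of_nonneg_left h1 hM.le
      _ = k * ‖u - v‖ := by rw [hk]; ring
  -- uniqueness in the open ball of radius r₀
  have huniq : ∀ w z : X, ‖w‖ < r₀ → ‖z‖ < r₀ → w = A (f w + g) → z = A (f z + g) →
      w = z := by
    intro w z hw hz hwf hzf
    by_contra hne
    have hwz : 0 < ‖w - z‖ := by
      rw [norm_pos_iff, sub_ne_zero]; exact hne
    have hest : ‖w - z‖ ≤ M * c * (‖w‖ + ‖z‖) ^ α * ‖w - z‖ := by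
      calc ‖w - z‖ = ‖A (f w + g) - A (f z + g)‖ := by rw [← hwf, ← hzf]
        _ = ‖A (f w - f z)‖ := by
            rw [← map_sub]; congr 2; abel
        _ ≤ ‖A‖ * ‖f w - f z‖ := A.le_opNorm _
        _ ≤ M * (c * (‖w‖ + ‖z‖) ^ α * ‖w - z‖) := by
            apply mul_le_mul hA (hf w z) (norm_nonneg _) hM.le
        _ = M * c * (‖w‖ + ‖z‖) ^ α * ‖w - z‖ := by ring
    have hsum : 0 ≤ ‖w‖ + ‖z‖ := by positivity
    rcases eq_or_lt_of_le hsum with h0 | hpos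
    · have hw0 : w = 0 := by
        have := norm_nonneg w
        have := norm_nonneg z
        rw [← norm_eq_zero]; linarith
      have hz0 : z = 0 := by
        have := norm_nonneg w
        have := norm_nonneg z
        rw [← norm_eq_zero]; linarith
      exact hne (hw0.trans hz0.symm)
    · have hlt : M * c * (‖w‖ + ‖z‖) ^ α < 1 := by
        have h1 : (‖w‖ + ‖z‖) ^ α < (2 * r₀) ^ α :=
          Real.rpow_lt_rpow hsum (by linarith) hα
        have h2r₀ : (2 * r₀) ^ α = 1 / (c * M) := by
          rw [hr₀def]
          have : 2 * ((1:ℝ) / 2 * R) = R := by ring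
          rw [this, hRα]
        calc M * c * (‖w‖ + ‖z‖) ^ α < M * c * (2 * r₀) ^ α := by
              exact (mul_lt_mul_iff_right₀ (by positivity)).mpr h1
          _ = 1 := by rw [h2r₀]; field_simp
      have hmul := mul_lt_mul_of_pos_right hlt hwz
      rw [one_mul] at hmul
      linarith
  -- Banach fixed point on the closed ball
  set S := Metric.closedBall (0 : X) r with hS
  have hScl : IsClosed S := Metric.isClosed_closedBall
  haveI : CompleteSpace S := hScl.completeSpace_coe
  haveI : Nonempty S := ⟨⟨0, by simp [hS, hrpos.le]⟩⟩
  have hmem : ∀ u : X, u ∈ S ↔ ‖u‖ ≤ r := by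
    intro u; simp [hS, Metric.mem_closedBall, dist_zero_right]
  set Φ : S → S := fun u => ⟨A (f u.1 + g), (hmem _).mpr (hinv u.1 ((hmem _).mp u.2))⟩
    with hΦ
  set K : NNReal := ⟨k, hknn⟩ with hK
  have hcontr : ContractingWith K Φ := by
    constructor
    · exact_mod_cast hk1
    · apply LipschitzWith.of_dist_le_mul
      intro u v
      have : dist (Φ u) (Φ v) = ‖A (f u.1 + g) - A (f v.1 + g)‖ := by
        rw [Subtype.dist_eq, dist_eq_norm]
      rw [this, Subtype.dist_eq, dist_eq_norm]
      exact hlip u.1 v.1 ((hmem _).mp u.2) ((hmem _).mp v.2)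
  have hexist : ∃ u : S, Φ u = u := ⟨hcontr.fixedPoint, hcontr.fixedPoint_isFixedPt⟩
  obtain ⟨u, hufix⟩ := hexist
  refine ⟨u.1, ⟨lt_of_le_of_lt ((hmem _).mp u.2) hrr₀, ?_⟩, ?_⟩
  · have := congrArg Subtype.val hufix
    exact this.symm
  · intro v ⟨hv1, hv2⟩
    exact huniq v u.1 hv1 (lt_of_le_of_lt ((hmem _).mp u.2) hrr₀) hv2
      (congrArg Subtype.val hufix).symm
end

section
/- Let X be a complex Banach space, ρ_K ∈ ℝ, and K : ℝ² → B(X) with K(τ₁,τ₂) = 0 unless τ₁ ≥ 0 and τ₂ ≥ 0, such that (τ₁,τ₂) ↦ ‖K(τ₁,τ₂)‖ is measurable, L_K := ∫_ℝ∫_ℝ ‖K(τ₁,τ₂)‖ e^{−ρ_K(τ₁+τ₂)} dτ₁ dτ₂ < ∞, and ℓ_K := sup_{τ₁,τ₂∈ℝ} ∫_ℝ ‖K(t−τ₁, t−τ₂)‖ e^{−ρ_K(2t−τ₁−τ₂)} dt < ∞. Let q : X × X → X be bilinear with ‖q(x,y)‖ ≤ C_q ‖x‖ ‖y‖ for all x,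 y. Then for every ρ ≥ ρ_K and all strongly measurable u, v : ℝ → X: ∫_ℝ ( ∫_ℝ∫_ℝ ‖K(t−τ₁,t−τ₂)‖ · ‖q(u(τ₁), v(τ₂))‖ dτ₁ dτ₂ )² e^{−4ρt} dt ≤ L_K ℓ_K C_q² ( ∫_ℝ ‖u(τ)‖² e^{−2ρτ} dτ ) ( ∫_ℝ ‖v(τ)‖² e^{−2ρτ} dτ ). In particular, the fully nonlocal quadratic map f(u)(t) = ∬ K(t−τ₁,t−τ₂) q(u(τ₁),u(τ₂)) dτ₁dτ₂ maps L²_ρ(ℝ,X) into L²_{2ρ}(ℝ,X). -/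
open MeasureTheory ENNReal Real

lemma qnwe_hexp (a b : ℝ) :
    ENNReal.ofReal (Real.exp a) * ENNReal.ofReal (Real.exp b)
      = ENNReal.ofReal (Real.exp (a + b)) := by
  rw [← ENNReal.ofReal_mul (Real.exp_nonneg a), ← Real.exp_add]

lemma qnwe_halfpow (x : ℝ≥0∞) : (x ^ (1 / (2:ℝ))) ^ (2 : ℕ) = x := by
  rw [← ENNReal.rpow_natCast (x ^ (1/(2:ℝ))) 2, ← ENNReal.rpow_mul]
  norm_num

lemma qnwe_cs {α : Type*} [MeasurableSpace α] (μpr : Measure α)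
    (a e e' m : α → ℝ≥0∞) (ha : Measurable a) (he : Measurable e)
    (he' : Measurable e') (hm : Measurable m) (hee : ∀ p, e p * e' p = 1) :
    (∫⁻ p, a p * m p ∂μpr) ^ 2
      ≤ (∫⁻ p, a p * e p ∂μpr) * (∫⁻ p, a p * e' p * m p ^ 2 ∂μpr) := by
  set f : α → ℝ≥0∞ := fun p => (a p * e p) ^ (1/(2:ℝ)) with hf
  set g : α → ℝ≥0∞ := fun p => (a p * e' p) ^ (1/(2:ℝ)) * m p with hg
  have hfg : ∀ p, a p * m p = f p * g p := by
    intro p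
    simp only [hf, hg]
    rw [← mul_assoc, ← ENNReal.mul_rpow_of_nonneg _ _ (by norm_num : (0:ℝ) ≤ 1/2),
      mul_mul_mul_comm, hee, mul_one, ← sq, ← ENNReal.rpow_natCast (a p) 2,
      ← ENNReal.rpow_mul]
    norm_num
  have hfm : Measurable f := (ha.mul he).pow_const _
  have hgm : Measurable g := ((ha.mul he').pow_const _).mul hm
  have h22 : (2:ℝ).HolderConjugate 2 := Real.HolderConjugate.two_two
  have hH := ENNReal.lintegral_mul_le_Lp_mul_Lq μpr h22 hfm.aemeasurable hgm.aemeasurable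
  calc (∫⁻ p, a p * m p ∂μpr) ^ 2 = (∫⁻ p, (f * g) p ∂μpr) ^ 2 := by
        refine congrArg (· ^ 2) (lintegral_congr fun p => ?_)
        simpa using hfg p
    _ ≤ ((∫⁻ p, f p ^ (2:ℝ) ∂μpr) ^ (1/(2:ℝ)) * (∫⁻ p, g p ^ (2:ℝ) ∂μpr) ^ (1/(2:ℝ))) ^ 2 :=
        pow_le_pow_left₀ zero_le hH 2
    _ = (∫⁻ p, f p ^ (2:ℝ) ∂μpr) * (∫⁻ p, g p ^ (2:ℝ) ∂μpr) := by
        rw [mul_pow, qnwe_halfpow, qnwe_halfpow]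
    _ = (∫⁻ p, a p * e p ∂μpr) * (∫⁻ p, a p * e' p * m p ^ 2 ∂μpr) := by
        congr 1
        · refine lintegral_congr fun p => ?_
          simp only [hf]
          rw [← ENNReal.rpow_mul]
          norm_num
        · refine lintegral_congr fun p => ?_
          simp only [hg]
          rw [ENNReal.mul_rpow_of_nonneg _ _ (by norm_num : (0:ℝ) ≤ 2),
            ← ENNReal.rpow_mul, ← ENNReal.rpow_natCast (m p) 2]
          norm_num

lemma qnwe_pull (A E' Et erho : ℝ → ℝ≥0∞) (b w : ℝ≥0∞) (hb : b ≠ ⊤) (hw : w ≠ ⊤)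
    (hsplit : ∀ t, E' t * Et t = erho t * w) (ℓ : ℝ≥0∞)
    (hℓ : (∫⁻ t, A t * erho t) ≤ ℓ) :
    (∫⁻ t, A t * E' t * b * Et t) ≤ b * w * ℓ := by
  calc (∫⁻ t, A t * E' t * b * Et t) = ∫⁻ t, (b * w) * (A t * erho t) := by
        refine lintegral_congr fun t => ?_
        calc A t * E' t * b * Et t = (A t * b) * (E' t * Et t) := by ring
          _ = (A t * b) * (erho t * w) := by rw [hsplit t]
          _ = (b * w) * (A t * erho t) := by ring
    _ = (b * w) * ∫⁻ t, A t * erho t := lintegral_const_mul' _ _ (ENNReal.mul_ne_top hb hw)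
    _ ≤ (b * w) * ℓ := mul_le_mul_right hℓ _

set_option maxHeartbeats 1000000 in
/-- **Section 2.3.1.** Weighted boundedness of the fully nonlocal quadratic nonlinearity:
the double convolution with a causal operator-valued kernel `K` composed with a bounded
bilinear map `q` maps `L²_ρ(ℝ,X)` into `L²_{2ρ}(ℝ,X)`, quantitatively. -/
theorem quadratic_nonlocal_weighted_estimate
    {X : Type*} [NormedAddCommGroup X] [NormedSpace ℂ X] [CompleteSpace X]
    (ρK : ℝ) (K : ℝ → ℝ → X →L[ℂ] X)
    (hKcausal : ∀ τ₁ τ₂ : ℝ, (τ₁ < 0 ∨ τ₂ < 0) → K τ₁ τ₂ = 0)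
    (hKmeas : Measurable fun p : ℝ × ℝ => ‖K p.1 p.2‖)
    (LK : ℝ≥0∞)
    (hLK : LK = ∫⁻ τ₁ : ℝ, ∫⁻ τ₂ : ℝ,
        (‖K τ₁ τ₂‖₊ : ℝ≥0∞) * ENNReal.ofReal (Real.exp (-ρK * (τ₁ + τ₂))))
    (hLK_fin : LK < ⊤)
    (ℓK : ℝ≥0∞)
    (hℓK : ℓK = ⨆ τ₁ : ℝ, ⨆ τ₂ : ℝ, ∫⁻ t : ℝ,
        (‖K (t - τ₁) (t - τ₂)‖₊ : ℝ≥0∞) * ENNReal.ofReal (Real.exp (-ρK * (2 * t - τ₁ - τ₂))))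
    (hℓK_fin : ℓK < ⊤)
    (q : X →ₗ[ℂ] X →ₗ[ℂ] X) (Cq : NNReal)
    (hq : ∀ x y : X, ‖q x y‖ ≤ (Cq : ℝ) * ‖x‖ * ‖y‖)
    (ρ : ℝ) (hρ : ρK ≤ ρ)
    (u v : ℝ → X) (hu : StronglyMeasurable u) (hv : StronglyMeasurable v) :
    (∫⁻ t : ℝ, (∫⁻ τ₁ : ℝ, ∫⁻ τ₂ : ℝ,
          (‖K (t - τ₁) (t - τ₂)‖₊ : ℝ≥0∞) * (‖q (u τ₁) (v τ₂)‖₊ : ℝ≥0∞)) ^ 2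
        * ENNReal.ofReal (Real.exp (-4 * ρ * t)))
      ≤ LK * ℓK * (Cq : ℝ≥0∞) ^ 2
        * (∫⁻ τ : ℝ, (‖u τ‖₊ : ℝ≥0∞) ^ 2 * ENNReal.ofReal (Real.exp (-2 * ρ * τ)))
        * (∫⁻ τ : ℝ, (‖v τ‖₊ : ℝ≥0∞) ^ 2 * ENNReal.ofReal (Real.exp (-2 * ρ * τ))) := by
  have hqE : ∀ x y : X, (‖q x y‖₊ : ℝ≥0∞) ≤ (Cq : ℝ≥0∞) * ‖x‖₊ * ‖y‖₊ := by
    intro x y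
    calc (‖q x y‖₊ : ℝ≥0∞) = ENNReal.ofReal ‖q x y‖ := ((ofReal_norm _).trans (enorm_eq_nnnorm _)).symm
      _ ≤ ENNReal.ofReal ((Cq : ℝ) * ‖x‖ * ‖y‖) := ENNReal.ofReal_le_ofReal (hq x y)
      _ = (Cq : ℝ≥0∞) * ‖x‖₊ * ‖y‖₊ := by
          rw [ENNReal.ofReal_mul (by positivity), ENNReal.ofReal_mul (NNReal.coe_nonneg _),
            ofReal_norm, ofReal_norm, enorm_eq_nnnorm, enorm_eq_nnnorm, ENNReal.ofReal_coe_nnreal]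
  have hkm : Measurable fun p : ℝ × ℝ => (‖K p.1 p.2‖₊ : ℝ≥0∞) := by
    simp_rw [← enorm_eq_nnnorm, ← ofReal_norm]
    exact hKmeas.ennreal_ofReal
  have hUm : Measurable fun τ : ℝ => (‖u τ‖₊ : ℝ≥0∞) := hu.enorm
  have hVm : Measurable fun τ : ℝ => (‖v τ‖₊ : ℝ≥0∞) := hv.enorm
  have hexpm : ∀ {α : Type} [MeasurableSpace α] (f : α → ℝ), Measurable f →
      Measurable fun x => ENNReal.ofReal (Real.exp (f x)) :=
    fun f hf => (Real.measurable_exp.comp hf).ennreal_ofReal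
  -- causality comparisons
  have hcaus : ∀ s₁ s₂ : ℝ,
      (‖K s₁ s₂‖₊ : ℝ≥0∞) * ENNReal.ofReal (Real.exp (-(ρ * (s₁ + s₂))))
        ≤ (‖K s₁ s₂‖₊ : ℝ≥0∞) * ENNReal.ofReal (Real.exp (-ρK * (s₁ + s₂))) := by
    intro s₁ s₂
    rcases lt_or_ge s₁ 0 with h1 | h1
    · simp [hKcausal s₁ s₂ (Or.inl h1)]
    rcases lt_or_ge s₂ 0 with h2 | h2
    · simp [hKcausal s₁ s₂ (Or.inr h2)]
    refine mul_le_mul_right (ENNReal.ofReal_le_ofReal (Real.exp_le_exp.2 ?_)) _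
    have := mul_le_mul_of_nonneg_right hρ (add_nonneg h1 h2)
    linarith
  have hcaus2 : ∀ t τ₁ τ₂ : ℝ,
      (‖K (t - τ₁) (t - τ₂)‖₊ : ℝ≥0∞)
          * ENNReal.ofReal (Real.exp (-(ρ * ((t - τ₁) + (t - τ₂)))))
        ≤ (‖K (t - τ₁) (t - τ₂)‖₊ : ℝ≥0∞)
          * ENNReal.ofReal (Real.exp (-ρK * (2 * t - τ₁ - τ₂))) := by
    intro t τ₁ τ₂
    rcases lt_or_ge (t - τ₁) 0 with h1 | h1
    · simp [hKcausal _ _ (Or.inl h1)]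
    rcases lt_or_ge (t - τ₂) 0 with h2 | h2
    · simp [hKcausal _ _ (Or.inr h2)]
    refine mul_le_mul_right (ENNReal.ofReal_le_ofReal (Real.exp_le_exp.2 ?_)) _
    have := mul_le_mul_of_nonneg_right hρ (add_nonneg h1 h2)
    nlinarith [this]
  -- the kernel-times-weight measurable family
  have hamt : ∀ t : ℝ, Measurable fun p : ℝ × ℝ => (‖K (t - p.1) (t - p.2)‖₊ : ℝ≥0∞) := by
    intro t
    exact Measurable.comp (f := fun p : ℝ × ℝ => (t - p.1, t - p.2))
      (g := fun p : ℝ × ℝ => (‖K p.1 p.2‖₊ : ℝ≥0∞)) hkm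
      ((measurable_const.sub measurable_fst).prodMk (measurable_const.sub measurable_snd))
  -- key pointwise-in-t estimate
  have hkey : ∀ t : ℝ,
      (∫⁻ p : ℝ × ℝ, (‖K (t - p.1) (t - p.2)‖₊ : ℝ≥0∞)
          * ((Cq : ℝ≥0∞) * ‖u p.1‖₊ * ‖v p.2‖₊)
          ∂((volume : Measure ℝ).prod volume)) ^ 2
        ≤ LK * ∫⁻ p : ℝ × ℝ, (‖K (t - p.1) (t - p.2)‖₊ : ℝ≥0∞)
            * ENNReal.ofReal (Real.exp (ρ * ((t - p.1) + (t - p.2))))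
            * ((Cq : ℝ≥0∞) * ‖u p.1‖₊ * ‖v p.2‖₊) ^ 2
            ∂((volume : Measure ℝ).prod volume) := by
    intro t
    have hcs := qnwe_cs ((volume : Measure ℝ).prod volume)
      (fun p => (‖K (t - p.1) (t - p.2)‖₊ : ℝ≥0∞))
      (fun p => ENNReal.ofReal (Real.exp (-(ρ * ((t - p.1) + (t - p.2))))))
      (fun p => ENNReal.ofReal (Real.exp (ρ * ((t - p.1) + (t - p.2)))))
      (fun p => (Cq : ℝ≥0∞) * ‖u p.1‖₊ * ‖v p.2‖₊)
      (hamt t)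
      (hexpm _ ((((measurable_const.sub measurable_fst).add
        (measurable_const.sub measurable_snd)).const_mul ρ).neg))
      (hexpm _ (((measurable_const.sub measurable_fst).add
        (measurable_const.sub measurable_snd)).const_mul ρ))
      ((measurable_const.mul (Measurable.comp (f := fun p : ℝ × ℝ => p.1)
          (g := fun τ : ℝ => (‖u τ‖₊ : ℝ≥0∞)) hUm measurable_fst)).mul
        (Measurable.comp (f := fun p : ℝ × ℝ => p.2)
          (g := fun τ : ℝ => (‖v τ‖₊ : ℝ≥0∞)) hVm measurable_snd))
      (fun p => by
        rw [qnwe_hexp, neg_add_cancel, Real.exp_zero, ENNReal.ofReal_one])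
    refine hcs.trans (mul_le_mul_left ?_ _)
    -- the first factor is at most LK
    have hMP : MeasurePreserving (fun p : ℝ × ℝ => (t - p.1, t - p.2))
        ((volume : Measure ℝ).prod volume) ((volume : Measure ℝ).prod volume) :=
      (Measure.measurePreserving_sub_left volume t).prod (Measure.measurePreserving_sub_left volume t)
    have hFm : Measurable fun s : ℝ × ℝ => (‖K s.1 s.2‖₊ : ℝ≥0∞)
        * ENNReal.ofReal (Real.exp (-(ρ * (s.1 + s.2)))) :=
      hkm.mul (hexpm _ (((measurable_fst.add measurable_snd).const_mul ρ).neg))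
    calc (∫⁻ p : ℝ × ℝ, (‖K (t - p.1) (t - p.2)‖₊ : ℝ≥0∞)
            * ENNReal.ofReal (Real.exp (-(ρ * ((t - p.1) + (t - p.2)))))
            ∂((volume : Measure ℝ).prod volume))
        = ∫⁻ s : ℝ × ℝ, (‖K s.1 s.2‖₊ : ℝ≥0∞)
            * ENNReal.ofReal (Real.exp (-(ρ * (s.1 + s.2))))
            ∂((volume : Measure ℝ).prod volume) := hMP.lintegral_comp hFm
      _ ≤ ∫⁻ s : ℝ × ℝ, (‖K s.1 s.2‖₊ : ℝ≥0∞)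
            * ENNReal.ofReal (Real.exp (-ρK * (s.1 + s.2)))
            ∂((volume : Measure ℝ).prod volume) :=
          lintegral_mono fun s => hcaus s.1 s.2
      _ = LK := by
          rw [hLK]
          exact lintegral_prod _ (hkm.mul (hexpm _
            ((measurable_fst.add measurable_snd).const_mul (-ρK)))).aemeasurable
  -- inner estimate after swapping
  have hinner : ∀ p : ℝ × ℝ,
      (∫⁻ t : ℝ, (‖K (t - p.1) (t - p.2)‖₊ : ℝ≥0∞)
          * ENNReal.ofReal (Real.exp (ρ * ((t - p.1) + (t - p.2))))
          * ((Cq : ℝ≥0∞) * ‖u p.1‖₊ * ‖v p.2‖₊) ^ 2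
          * ENNReal.ofReal (Real.exp (-4 * ρ * t)))
        ≤ (ℓK * (Cq : ℝ≥0∞) ^ 2)
          * (((‖u p.1‖₊ : ℝ≥0∞) ^ 2 * ENNReal.ofReal (Real.exp (-2 * ρ * p.1)))
            * ((‖v p.2‖₊ : ℝ≥0∞) ^ 2 * ENNReal.ofReal (Real.exp (-2 * ρ * p.2)))) := by
    intro p
    have hb : ((Cq : ℝ≥0∞) * ‖u p.1‖₊ * ‖v p.2‖₊) ^ 2 ≠ ⊤ :=
      ENNReal.pow_ne_top (ENNReal.mul_ne_top
        (ENNReal.mul_ne_top ENNReal.coe_ne_top ENNReal.coe_ne_top) ENNReal.coe_ne_top)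
    have hw : ENNReal.ofReal (Real.exp (-2 * ρ * p.1))
        * ENNReal.ofReal (Real.exp (-2 * ρ * p.2)) ≠ ⊤ :=
      ENNReal.mul_ne_top ENNReal.ofReal_ne_top ENNReal.ofReal_ne_top
    have hsplit : ∀ t : ℝ,
        ENNReal.ofReal (Real.exp (ρ * ((t - p.1) + (t - p.2))))
            * ENNReal.ofReal (Real.exp (-4 * ρ * t))
          = ENNReal.ofReal (Real.exp (-(ρ * ((t - p.1) + (t - p.2)))))
            * (ENNReal.ofReal (Real.exp (-2 * ρ * p.1))
              * ENNReal.ofReal (Real.exp (-2 * ρ * p.2))) := by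
      intro t
      rw [qnwe_hexp, qnwe_hexp, qnwe_hexp]
      exact congrArg (fun x => ENNReal.ofReal (Real.exp x)) (by ring)
    have hℓb : (∫⁻ t : ℝ, (‖K (t - p.1) (t - p.2)‖₊ : ℝ≥0∞)
        * ENNReal.ofReal (Real.exp (-(ρ * ((t - p.1) + (t - p.2)))))) ≤ ℓK := by
      refine le_trans (lintegral_mono fun t => hcaus2 t p.1 p.2) ?_
      rw [hℓK]
      exact le_iSup₂ (f := fun τ₁ τ₂ : ℝ => ∫⁻ t : ℝ, (‖K (t - τ₁) (t - τ₂)‖₊ : ℝ≥0∞)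
        * ENNReal.ofReal (Real.exp (-ρK * (2 * t - τ₁ - τ₂)))) p.1 p.2
    have h := qnwe_pull
      (fun t => (‖K (t - p.1) (t - p.2)‖₊ : ℝ≥0∞))
      (fun t => ENNReal.ofReal (Real.exp (ρ * ((t - p.1) + (t - p.2)))))
      (fun t => ENNReal.ofReal (Real.exp (-4 * ρ * t)))
      (fun t => ENNReal.ofReal (Real.exp (-(ρ * ((t - p.1) + (t - p.2))))))
      (((Cq : ℝ≥0∞) * ‖u p.1‖₊ * ‖v p.2‖₊) ^ 2)
      (ENNReal.ofReal (Real.exp (-2 * ρ * p.1)) * ENNReal.ofReal (Real.exp (-2 * ρ * p.2)))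
      hb hw hsplit ℓK hℓb
    refine h.trans (le_of_eq ?_)
    rw [mul_pow, mul_pow]
    ring
  -- big measurability for the swap
  have hbig : Measurable fun z : ℝ × (ℝ × ℝ) =>
      (‖K (z.1 - z.2.1) (z.1 - z.2.2)‖₊ : ℝ≥0∞)
        * ENNReal.ofReal (Real.exp (ρ * ((z.1 - z.2.1) + (z.1 - z.2.2))))
        * ((Cq : ℝ≥0∞) * ‖u z.2.1‖₊ * ‖v z.2.2‖₊) ^ 2
        * ENNReal.ofReal (Real.exp (-4 * ρ * z.1)) := by
    have h1 : Measurable fun z : ℝ × (ℝ × ℝ) =>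
        (‖K (z.1 - z.2.1) (z.1 - z.2.2)‖₊ : ℝ≥0∞) :=
      Measurable.comp (f := fun z : ℝ × (ℝ × ℝ) => (z.1 - z.2.1, z.1 - z.2.2))
        (g := fun p : ℝ × ℝ => (‖K p.1 p.2‖₊ : ℝ≥0∞)) hkm
        ((measurable_fst.sub (measurable_snd.fst)).prodMk
          (measurable_fst.sub (measurable_snd.snd)))
    have h2 : Measurable fun z : ℝ × (ℝ × ℝ) => (‖u z.2.1‖₊ : ℝ≥0∞) :=
      Measurable.comp (f := fun z : ℝ × (ℝ × ℝ) => z.2.1)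
        (g := fun τ : ℝ => (‖u τ‖₊ : ℝ≥0∞)) hUm (measurable_snd.fst)
    have h3 : Measurable fun z : ℝ × (ℝ × ℝ) => (‖v z.2.2‖₊ : ℝ≥0∞) :=
      Measurable.comp (f := fun z : ℝ × (ℝ × ℝ) => z.2.2)
        (g := fun τ : ℝ => (‖v τ‖₊ : ℝ≥0∞)) hVm (measurable_snd.snd)
    exact ((h1.mul (hexpm _ (((measurable_fst.sub measurable_snd.fst).add
        (measurable_fst.sub measurable_snd.snd)).const_mul ρ))).mul
      (((measurable_const.mul h2).mul h3).pow_const 2)).mul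
      (hexpm _ (measurable_fst.const_mul (-4 * ρ)))
  calc (∫⁻ t : ℝ, (∫⁻ τ₁ : ℝ, ∫⁻ τ₂ : ℝ,
          (‖K (t - τ₁) (t - τ₂)‖₊ : ℝ≥0∞) * (‖q (u τ₁) (v τ₂)‖₊ : ℝ≥0∞)) ^ 2
        * ENNReal.ofReal (Real.exp (-4 * ρ * t)))
      ≤ ∫⁻ t : ℝ, (∫⁻ τ₁ : ℝ, ∫⁻ τ₂ : ℝ,
          (‖K (t - τ₁) (t - τ₂)‖₊ : ℝ≥0∞) * ((Cq : ℝ≥0∞) * ‖u τ₁‖₊ * ‖v τ₂‖₊)) ^ 2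
        * ENNReal.ofReal (Real.exp (-4 * ρ * t)) :=
      lintegral_mono fun t => mul_le_mul_left (pow_le_pow_left₀ zero_le
        (lintegral_mono fun τ₁ => lintegral_mono fun τ₂ =>
          mul_le_mul_right (hqE _ _) _) 2) _
    _ = ∫⁻ t : ℝ, (∫⁻ p : ℝ × ℝ,
          (‖K (t - p.1) (t - p.2)‖₊ : ℝ≥0∞) * ((Cq : ℝ≥0∞) * ‖u p.1‖₊ * ‖v p.2‖₊)
          ∂((volume : Measure ℝ).prod volume)) ^ 2
        * ENNReal.ofReal (Real.exp (-4 * ρ * t)) := by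
      refine lintegral_congr fun t => ?_
      refine congrArg (· * _) (congrArg (· ^ 2) ?_)
      have hm2 : Measurable fun p : ℝ × ℝ => (‖K (t - p.1) (t - p.2)‖₊ : ℝ≥0∞)
          * ((Cq : ℝ≥0∞) * ‖u p.1‖₊ * ‖v p.2‖₊) :=
        (hamt t).mul ((measurable_const.mul (Measurable.comp (f := fun p : ℝ × ℝ => p.1)
            (g := fun τ : ℝ => (‖u τ‖₊ : ℝ≥0∞)) hUm measurable_fst)).mul
          (Measurable.comp (f := fun p : ℝ × ℝ => p.2)
            (g := fun τ : ℝ => (‖v τ‖₊ : ℝ≥0∞)) hVm measurable_snd))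
      exact lintegral_lintegral (f := fun τ₁ τ₂ : ℝ =>
        (‖K (t - τ₁) (t - τ₂)‖₊ : ℝ≥0∞) * ((Cq : ℝ≥0∞) * ‖u τ₁‖₊ * ‖v τ₂‖₊))
        hm2.aemeasurable
    _ ≤ ∫⁻ t : ℝ, (LK * ∫⁻ p : ℝ × ℝ, (‖K (t - p.1) (t - p.2)‖₊ : ℝ≥0∞)
          * ENNReal.ofReal (Real.exp (ρ * ((t - p.1) + (t - p.2))))
          * ((Cq : ℝ≥0∞) * ‖u p.1‖₊ * ‖v p.2‖₊) ^ 2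
          ∂((volume : Measure ℝ).prod volume))
        * ENNReal.ofReal (Real.exp (-4 * ρ * t)) :=
      lintegral_mono fun t => mul_le_mul_left (hkey t) _
    _ = LK * ∫⁻ t : ℝ, ∫⁻ p : ℝ × ℝ, (‖K (t - p.1) (t - p.2)‖₊ : ℝ≥0∞)
          * ENNReal.ofReal (Real.exp (ρ * ((t - p.1) + (t - p.2))))
          * ((Cq : ℝ≥0∞) * ‖u p.1‖₊ * ‖v p.2‖₊) ^ 2
          * ENNReal.ofReal (Real.exp (-4 * ρ * t))
          ∂((volume : Measure ℝ).prod volume) := by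
      rw [← lintegral_const_mul' LK _ hLK_fin.ne]
      refine lintegral_congr fun t => ?_
      rw [mul_assoc]
      congr 1
      exact (lintegral_mul_const' _ _ ENNReal.ofReal_ne_top).symm
    _ = LK * ∫⁻ p : ℝ × ℝ, ∫⁻ t : ℝ, (‖K (t - p.1) (t - p.2)‖₊ : ℝ≥0∞)
          * ENNReal.ofReal (Real.exp (ρ * ((t - p.1) + (t - p.2))))
          * ((Cq : ℝ≥0∞) * ‖u p.1‖₊ * ‖v p.2‖₊) ^ 2
          * ENNReal.ofReal (Real.exp (-4 * ρ * t))
          ∂(volume : Measure ℝ) ∂((volume : Measure ℝ).prod volume) := by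
      congr 1
      exact lintegral_lintegral_swap (f := fun (t : ℝ) (p : ℝ × ℝ) =>
        (‖K (t - p.1) (t - p.2)‖₊ : ℝ≥0∞)
          * ENNReal.ofReal (Real.exp (ρ * ((t - p.1) + (t - p.2))))
          * ((Cq : ℝ≥0∞) * ‖u p.1‖₊ * ‖v p.2‖₊) ^ 2
          * ENNReal.ofReal (Real.exp (-4 * ρ * t))) hbig.aemeasurable
    _ ≤ LK * ∫⁻ p : ℝ × ℝ, (ℓK * (Cq : ℝ≥0∞) ^ 2)
          * (((‖u p.1‖₊ : ℝ≥0∞) ^ 2 * ENNReal.ofReal (Real.exp (-2 * ρ * p.1)))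
            * ((‖v p.2‖₊ : ℝ≥0∞) ^ 2 * ENNReal.ofReal (Real.exp (-2 * ρ * p.2))))
          ∂((volume : Measure ℝ).prod volume) :=
      mul_le_mul_right (lintegral_mono hinner) _
    _ = LK * ((ℓK * (Cq : ℝ≥0∞) ^ 2)
          * ((∫⁻ τ : ℝ, (‖u τ‖₊ : ℝ≥0∞) ^ 2 * ENNReal.ofReal (Real.exp (-2 * ρ * τ)))
            * (∫⁻ τ : ℝ, (‖v τ‖₊ : ℝ≥0∞) ^ 2 * ENNReal.ofReal (Real.exp (-2 * ρ * τ))))) := by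
      rw [lintegral_const_mul' _ _ (ENNReal.mul_ne_top hℓK_fin.ne
        (ENNReal.pow_ne_top ENNReal.coe_ne_top))]
      have hlin : Measurable fun τ : ℝ => -2 * ρ * τ := by fun_prop
      have hUw : Measurable fun τ : ℝ =>
          (‖u τ‖₊ : ℝ≥0∞) ^ 2 * ENNReal.ofReal (Real.exp (-2 * ρ * τ)) :=
        (hUm.pow_const 2).mul (hexpm _ hlin)
      have hVw : Measurable fun τ : ℝ =>
          (‖v τ‖₊ : ℝ≥0∞) ^ 2 * ENNReal.ofReal (Real.exp (-2 * ρ * τ)) :=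
        (hVm.pow_const 2).mul (hexpm _ hlin)
      congr 1
      congr 1
      exact lintegral_prod_mul hUw.aemeasurable hVw.aemeasurable
    _ = LK * ℓK * (Cq : ℝ≥0∞) ^ 2
        * (∫⁻ τ : ℝ, (‖u τ‖₊ : ℝ≥0∞) ^ 2 * ENNReal.ofReal (Real.exp (-2 * ρ * τ)))
        * (∫⁻ τ : ℝ, (‖v τ‖₊ : ℝ≥0∞) ^ 2 * ENNReal.ofReal (Real.exp (-2 * ρ * τ))) := by
      ring
end

section
/- Let H be a complex Hilbert space, H₀ ⊆ H a closed subspace, d > 0, and T : H → H a bounded linear operator with Re⟨Tx, x⟩ ≥ d‖x‖² for all x ∈ H. Denote by ι₀ : H₀ → H and ι₁ : H₀^⊥ → H the inclusion maps and by P₀ : H → H₀ and P₁ : H → H₀^⊥ the orthogonal projections (the adjoints of the inclusions), and set T_{jk} := P_j T ι_k for j,k ∈ {0,1}. Then: (i) Re⟨T₁₁ φ, φ⟩ ≥ d‖φ‖² for all φ ∈ H₀^⊥; (ii) T₁₁ is boundedly invertible on H₀^⊥, i.e., there is a bounded operator R on H₀^⊥ with R T₁₁ = id and T₁₁ R = id;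 (iii) the Schur complement satisfies Re⟨(T₀₀ − T₀₁ R T₁₀) φ, φ⟩ ≥ d‖φ‖² for all φ ∈ H₀. -/
open scoped InnerProductSpace

/-- The compression `P_j ∘ T ∘ ι_k` of a bounded operator `T` between (orthogonal
complements of) closed subspaces of a Hilbert space. -/
noncomputable def compress {H : Type*} [NormedAddCommGroup H] [InnerProductSpace ℂ H]
    (Hj Hk : Submodule ℂ H) [Submodule.HasOrthogonalProjection Hj] (T : H →L[ℂ] H) :
    ↥Hk →L[ℂ] ↥Hj :=
  Hj.orthogonalProjectionOnto.comp (T.comp Hk.subtypeL)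

lemma inner_compress {H : Type*} [NormedAddCommGroup H] [InnerProductSpace ℂ H]
    (Hj Hk : Submodule ℂ H) [Submodule.HasOrthogonalProjection Hj] (T : H →L[ℂ] H)
    (φ : ↥Hk) (ψ : ↥Hj) :
    ⟪compress Hj Hk T φ, ψ⟫_ℂ = ⟪T (φ : H), (ψ : H)⟫_ℂ := by
  simp only [compress, ContinuousLinearMap.comp_apply, Submodule.subtypeL_apply]
  exact Submodule.inner_orthogonalProjectionOnto_eq_of_mem_right (K := Hj) ψ (T ↑φ)

/-- Accretive bounded operators are antilipschitz. -/
lemma antilipschitz_of_accretive {E : Type*} [NormedAddCommGroup E] [InnerProductSpace ℂ E]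
    (S : E →L[ℂ] E) (d : ℝ) (hd : 0 < d)
    (hS : ∀ φ : E, d * ‖φ‖ ^ 2 ≤ (⟪S φ, φ⟫_ℂ).re) :
    AntilipschitzWith (⟨d, hd.le⟩ : NNReal)⁻¹ S := by
  apply S.antilipschitz_of_bound
  intro x
  rcases eq_or_ne x 0 with rfl | hx
  · simp
  · have hx' : 0 < ‖x‖ := norm_pos_iff.mpr hx
    have h1 : d * ‖x‖ ^ 2 ≤ ‖S x‖ * ‖x‖ := by
      calc d * ‖x‖ ^ 2 ≤ (⟪S x, x⟫_ℂ).re := hS x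
        _ ≤ ‖⟪S x, x⟫_ℂ‖ := Complex.re_le_norm _
        _ ≤ ‖S x‖ * ‖x‖ := norm_inner_le_norm _ _
    have : d * ‖x‖ ≤ ‖S x‖ := by
      have := (mul_le_mul_iff_of_pos_right hx').mp (by nlinarith [sq_nonneg ‖x‖] : d * ‖x‖ * ‖x‖ ≤ ‖S x‖ * ‖x‖)
      exact this
    have hco : ((((⟨d, hd.le⟩ : NNReal))⁻¹ : NNReal) : ℝ) = d⁻¹ := NNReal.coe_inv _
    rw [hco, ← div_eq_inv_mul, le_div_iff₀ hd]
    linarith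

/-- **Lemma 3.7.** Strict accretivity of a bounded operator `T` on a complex Hilbert space
passes to the compression `T₁₁` to the orthogonal complement of a closed subspace `H₀`
(which is then boundedly invertible) and to the corresponding Schur complement
`T₀₀ − T₀₁ T₁₁⁻¹ T₁₀`. -/
theorem accretivity_compression_schur_complement
    {H : Type*} [NormedAddCommGroup H] [InnerProductSpace ℂ H] [CompleteSpace H]
    (H₀ : Submodule ℂ H) [Submodule.HasOrthogonalProjection H₀]
    (d : ℝ) (hd : 0 < d) (T : H →L[ℂ] H)
    (hT : ∀ x : H, d * ‖x‖ ^ 2 ≤ (⟪T x, x⟫_ℂ).re) :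
    (∀ φ : ↥H₀ᗮ, d * ‖φ‖ ^ 2 ≤ (⟪compress H₀ᗮ H₀ᗮ T φ, φ⟫_ℂ).re) ∧
      ∃ R : ↥H₀ᗮ →L[ℂ] ↥H₀ᗮ,
        R.comp (compress H₀ᗮ H₀ᗮ T) = ContinuousLinearMap.id ℂ ↥H₀ᗮ ∧
        (compress H₀ᗮ H₀ᗮ T).comp R = ContinuousLinearMap.id ℂ ↥H₀ᗮ ∧
        ∀ φ : ↥H₀, d * ‖φ‖ ^ 2 ≤
          (⟪(compress H₀ H₀ T - (compress H₀ H₀ᗮ T).comp (R.comp (compress H₀ᗮ H₀ T))) φ,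
            φ⟫_ℂ).re := by
  set S := compress H₀ᗮ H₀ᗮ T with hSdef
  -- Part (i): accretivity of the compression
  have hacc : ∀ φ : ↥H₀ᗮ, d * ‖φ‖ ^ 2 ≤ (⟪S φ, φ⟫_ℂ).re := by
    intro φ
    have := hT (φ : H)
    rwa [inner_compress, Submodule.coe_norm]
  refine ⟨hacc, ?_⟩
  -- S is antilipschitz
  have hanti := antilipschitz_of_accretive S d hd hacc
  -- S has dense range
  have hdense : S.range.topologicalClosure = ⊤ := by
    rw [← Submodule.orthogonal_orthogonal_eq_closure, Submodule.orthogonal_eq_top_iff]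
    rw [Submodule.eq_bot_iff]
    intro y hy
    have h0 : (⟪S y, y⟫_ℂ) = 0 := hy (S y) ⟨y, rfl⟩
    have h1 := hacc y
    rw [h0] at h1
    simp only [Complex.zero_re] at h1
    have hsq : ‖y‖ ^ 2 = 0 := le_antisymm (by nlinarith) (sq_nonneg _)
    exact norm_eq_zero.mp (sq_eq_zero_iff.mp hsq)
  have hbij : Function.Bijective S :=
    (S.bijective_iff_dense_range_and_antilipschitz).mpr ⟨hdense, _, hanti⟩
  have hker : S.ker = ⊥ := LinearMap.ker_eq_bot_of_injective hbij.1
  have hrange : S.range = ⊤ := LinearMap.range_eq_top.mpr hbij.2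
  set e := ContinuousLinearEquiv.ofBijective S hker hrange with hedef
  refine ⟨(e.symm : ↥H₀ᗮ →L[ℂ] ↥H₀ᗮ), ?_, ?_, ?_⟩
  · ext x
    exact congrArg _ (ContinuousLinearEquiv.ofBijective_symm_apply_apply S hker hrange x)
  · ext x
    exact congrArg _ (ContinuousLinearEquiv.ofBijective_apply_symm_apply S hker hrange x)
  · -- Part (iii): the Schur complement
    intro φ
    set ψ : ↥H₀ᗮ := -(e.symm (compress H₀ᗮ H₀ T φ)) with hψdef
    have hSψ : S ψ = -(compress H₀ᗮ H₀ T φ) := by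
      rw [hψdef, map_neg]
      congr 1
      exact ContinuousLinearEquiv.ofBijective_apply_symm_apply S hker hrange _
    set x : H := (φ : H) + (ψ : H) with hxdef
    -- orthogonality of the two components
    have hperp : ⟪(φ : H), (ψ : H)⟫_ℂ = 0 :=
      Submodule.inner_right_of_mem_orthogonal φ.2 ψ.2
    -- norm splits
    have hnorm : ‖x‖ ^ 2 = ‖(φ : H)‖ ^ 2 + ‖(ψ : H)‖ ^ 2 := by
      simpa [pow_two] using norm_add_sq_eq_norm_sq_add_norm_sq_of_inner_eq_zero _ _ hperp
    have hle : d * ‖φ‖ ^ 2 ≤ d * ‖x‖ ^ 2 := by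
      rw [hnorm, Submodule.coe_norm]
      nlinarith [sq_nonneg ‖(ψ : H)‖]
    -- expand the inner product
    have hTx : (⟪T x, x⟫_ℂ) =
        ⟪compress H₀ H₀ T φ, φ⟫_ℂ + ⟪compress H₀ H₀ᗮ T ψ, φ⟫_ℂ
          + (⟪compress H₀ᗮ H₀ T φ, ψ⟫_ℂ + ⟪S ψ, ψ⟫_ℂ) := by
      rw [inner_compress, inner_compress, inner_compress, inner_compress, hxdef]
      rw [map_add, inner_add_left, inner_add_right, inner_add_right]
      ring
    have hzero : ⟪compress H₀ᗮ H₀ T φ, ψ⟫_ℂ + ⟪S ψ, ψ⟫_ℂ = 0 := by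
      rw [hSψ, inner_neg_left]
      ring
    have hschur : (⟪(compress H₀ H₀ T
        - (compress H₀ H₀ᗮ T).comp ((e.symm : ↥H₀ᗮ →L[ℂ] ↥H₀ᗮ).comp (compress H₀ᗮ H₀ T))) φ,
          φ⟫_ℂ) = ⟪T x, x⟫_ℂ := by
      rw [hTx, hzero, add_zero]
      simp only [ContinuousLinearMap.sub_apply, ContinuousLinearMap.comp_apply,
        inner_sub_left]
      rw [hψdef]
      simp [map_neg, inner_neg_left, sub_eq_add_neg]
    rw [hschur]
    calc d * ‖φ‖ ^ 2 ≤ d * ‖x‖ ^ 2 := hle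
      _ ≤ (⟪T x, x⟫_ℂ).re := hT x
end

section
/- Let ε₀, α, γ, ω₀ > 0 be real numbers. Then for every z ∈ ℂ with Re z ≥ 0 one has ω₀² + z² + 2γz ≠ 0, and Re( z · ( ε₀ + α/(ω₀² + z² + 2γz) ) ) ≥ ε₀ · Re z. In particular, writing z = ν + it with ν ≥ 0, the Drude–Lorentz material law M(z) = ε₀ + α/(ω₀² + z² + 2γz) satisfies Re(zM(z)) = ε₀ν + ( αν(ω₀² + ν² + t² + 2γν) + 2αγt² ) / ( (ω₀² + ν² − t² + 2γν)² + 4(νt + γt)² ), and the second summand is nonnegative. -/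
/-- **Appendix A.1.** Accretivity of the Drude–Lorentz material law
`M(z) = ε₀ + α/(ω₀² + z² + 2γz)` on the closed right half-plane: the denominator does not
vanish, `Re(zM(z)) ≥ ε₀ Re z`, and `Re(zM(z))` is given by the explicit formula whose
non-`ε₀ν` summand is nonnegative. -/

theorem drude_lorentz_accretive
    (ε₀ α γ ω₀ : ℝ) (hε₀ : 0 < ε₀) (hα : 0 < α) (hγ : 0 < γ) (hω₀ : 0 < ω₀)
    (z : ℂ) (hz : 0 ≤ z.re) :
    ((ω₀ : ℂ) ^ 2 + z ^ 2 + 2 * (γ : ℂ) * z ≠ 0) ∧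
    ε₀ * z.re ≤ (z * ((ε₀ : ℂ) + (α : ℂ) / ((ω₀ : ℂ) ^ 2 + z ^ 2 + 2 * (γ : ℂ) * z))).re ∧
    (z * ((ε₀ : ℂ) + (α : ℂ) / ((ω₀ : ℂ) ^ 2 + z ^ 2 + 2 * (γ : ℂ) * z))).re
      = ε₀ * z.re
        + (α * z.re * (ω₀ ^ 2 + z.re ^ 2 + z.im ^ 2 + 2 * γ * z.re) + 2 * α * γ * z.im ^ 2)
          / ((ω₀ ^ 2 + z.re ^ 2 - z.im ^ 2 + 2 * γ * z.re) ^ 2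
            + 4 * (z.re * z.im + γ * z.im) ^ 2) ∧
    0 ≤ (α * z.re * (ω₀ ^ 2 + z.re ^ 2 + z.im ^ 2 + 2 * γ * z.re) + 2 * α * γ * z.im ^ 2)
          / ((ω₀ ^ 2 + z.re ^ 2 - z.im ^ 2 + 2 * γ * z.re) ^ 2
            + 4 * (z.re * z.im + γ * z.im) ^ 2) := by
  set ν := z.re with hν
  set t := z.im with ht
  set D : ℂ := (ω₀ : ℂ) ^ 2 + z ^ 2 + 2 * (γ : ℂ) * z with hDdef
  have hDre : D.re = ω₀ ^ 2 + ν ^ 2 - t ^ 2 + 2 * γ * ν := by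
    simp [hDdef, pow_two, Complex.add_re, Complex.mul_re, Complex.mul_im]
    ring
  have hDim : D.im = 2 * (ν * t + γ * t) := by
    simp [hDdef, pow_two, Complex.add_im, Complex.mul_re, Complex.mul_im]
    ring
  have hS : 0 < (ω₀ ^ 2 + ν ^ 2 - t ^ 2 + 2 * γ * ν) ^ 2 + 4 * (ν * t + γ * t) ^ 2 := by
    rcases eq_or_ne t 0 with h | h
    · subst_eqs
      rw [h]
      have hA : 0 < ω₀ ^ 2 + ν ^ 2 + 2 * γ * ν := by
        nlinarith [mul_nonneg hγ.le hz, sq_nonneg ν, pow_pos hω₀ 2]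
      nlinarith [mul_pos hA hA]
    · have h1 : 0 < (ν + γ) := by linarith
      have h2 : 0 < (ν * t + γ * t) ^ 2 := by
        have he : ν * t + γ * t = t * (ν + γ) := by ring
        rw [he]; positivity
      nlinarith [sq_nonneg (ω₀ ^ 2 + ν ^ 2 - t ^ 2 + 2 * γ * ν)]
  have hnormSq : Complex.normSq D
      = (ω₀ ^ 2 + ν ^ 2 - t ^ 2 + 2 * γ * ν) ^ 2 + 4 * (ν * t + γ * t) ^ 2 := by
    rw [Complex.normSq_apply, hDre, hDim]; ring
  have hD : D ≠ 0 := by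
    rw [← Complex.normSq_pos, hnormSq]; exact hS
  have hNnonneg : 0 ≤ α * ν * (ω₀ ^ 2 + ν ^ 2 + t ^ 2 + 2 * γ * ν) + 2 * α * γ * t ^ 2 := by
    have : 0 ≤ ω₀ ^ 2 + ν ^ 2 + t ^ 2 + 2 * γ * ν := by positivity
    have h1 : 0 ≤ α * ν := mul_nonneg hα.le hz
    have h2 : 0 ≤ α * ν * (ω₀ ^ 2 + ν ^ 2 + t ^ 2 + 2 * γ * ν) := mul_nonneg h1 this
    have h3 : 0 ≤ 2 * α * γ * t ^ 2 := by positivity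
    linarith
  have hfrac : 0 ≤ (α * ν * (ω₀ ^ 2 + ν ^ 2 + t ^ 2 + 2 * γ * ν) + 2 * α * γ * t ^ 2)
      / ((ω₀ ^ 2 + ν ^ 2 - t ^ 2 + 2 * γ * ν) ^ 2 + 4 * (ν * t + γ * t) ^ 2) :=
    div_nonneg hNnonneg hS.le
  have heq : (z * ((ε₀ : ℂ) + (α : ℂ) / D)).re
      = ε₀ * ν + (α * ν * (ω₀ ^ 2 + ν ^ 2 + t ^ 2 + 2 * γ * ν) + 2 * α * γ * t ^ 2)
          / ((ω₀ ^ 2 + ν ^ 2 - t ^ 2 + 2 * γ * ν) ^ 2 + 4 * (ν * t + γ * t) ^ 2) := by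
    rw [Complex.mul_re, Complex.add_re, Complex.add_im, Complex.div_re, Complex.div_im,
      Complex.ofReal_re, Complex.ofReal_im, hDre, hDim, hnormSq]
    simp only [Complex.ofReal_re, Complex.ofReal_im, ← hν, ← ht]
    field_simp
    ring
  refine ⟨hD, ?_, heq, hfrac⟩
  rw [heq]
  linarith
end

section
/- Let X be a complex Hilbert space, ν_κ > 0, and let κ : ℝ → B(X) be strongly measurable with κ(s) = 0 for all s < 0 and N² := ∫_0^∞ ‖κ(s)‖² e^{2ν_κ s} ds < ∞. Let q : X → X satisfy ‖q(x) − q(y)‖ ≤ C(‖x‖ + ‖y‖)‖x − y‖ for all x, y ∈ X, with C > 0. Then for every ν with 0 < ν ≤ ν_κ and all strongly measurable u, v : ℝ → X vanishing on (−∞, 0) with finite weighted norms ‖u‖_{−ν}² := ∫_ℝ ‖u(t)‖² e^{2νt} dt < ∞ and ‖v‖_{−ν} < ∞: ∫_ℝ ( ∫_ℝ ‖κ(t−s)‖ · ‖q(u(s)) − q(v(s))‖ ds )² e^{2νt} dt ≤ 2 C² N² ( ‖u‖_{−ν} + ‖v‖_{−ν} )² ‖u − v‖_{−ν}². In particular,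 the convolution map F(u)(t) = ∫_ℝ κ(t−s) q(u(s)) ds satisfies the local Lipschitz estimate ‖F(u) − F(v)‖_{−ν} ≤ √2 C N (‖u‖_{−ν} + ‖v‖_{−ν}) ‖u − v‖_{−ν} on causal functions. -/
open MeasureTheory ENNReal Real

lemma Emul (x y : ℝ) : ENNReal.ofReal (Real.exp x) * ENNReal.ofReal (Real.exp y)
    = ENNReal.ofReal (Real.exp (x + y)) := by
  rw [Real.exp_add, ENNReal.ofReal_mul (Real.exp_nonneg x)]

lemma Esq (x : ℝ) : ENNReal.ofReal (Real.exp x) ^ 2 = ENNReal.ofReal (Real.exp (2 * x)) := by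
  rw [sq, Emul, two_mul]

lemma Emono {x y : ℝ} (h : x ≤ y) :
    ENNReal.ofReal (Real.exp x) ≤ ENNReal.ofReal (Real.exp y) :=
  ENNReal.ofReal_le_ofReal (Real.exp_le_exp.2 h)

lemma rpow_two_eq (x : ℝ≥0∞) : x ^ (2 : ℝ) = x ^ (2 : ℕ) := by
  rw [← ENNReal.rpow_natCast x 2]; norm_num

lemma sq_half_rpow (x : ℝ≥0∞) : (x ^ ((1:ℝ)/2)) ^ (2:ℕ) = x := by
  rw [← ENNReal.rpow_natCast (x ^ ((1:ℝ)/2)) 2, ← ENNReal.rpow_mul]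
  norm_num

/-- Cauchy–Schwarz for `lintegral`. -/
lemma CS2 {f g : ℝ → ℝ≥0∞} (hf : AEMeasurable f) (hg : AEMeasurable g) :
    (∫⁻ s, f s * g s) ^ 2 ≤ (∫⁻ s, f s ^ 2) * (∫⁻ s, g s ^ 2) := by
  have hc : Real.HolderConjugate 2 2 := by constructor <;> norm_num
  have h := ENNReal.lintegral_mul_le_Lp_mul_Lq volume hc hf hg
  simp only [Pi.mul_apply, rpow_two_eq] at h
  calc (∫⁻ s, f s * g s) ^ 2
      ≤ ((∫⁻ s, f s ^ 2) ^ ((1:ℝ)/2) * (∫⁻ s, g s ^ 2) ^ ((1:ℝ)/2)) ^ 2 :=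
        pow_le_pow_left₀ zero_le h 2
    _ = (∫⁻ s, f s ^ 2) * (∫⁻ s, g s ^ 2) := by
        rw [mul_pow, sq_half_rpow, sq_half_rpow]

/-- **Example 3.16.** Local Lipschitz estimate in the exponentially growing weighted space
`L²_{−ν}(ℝ,X)` for the convolution of a causal kernel `κ ∈ L²_{−ν_κ}(ℝ, B(X))` with a
quadratically locally Lipschitz nonlinearity `q`, on causal functions. -/
theorem convolution_local_lipschitz_decaying_weight
    {X : Type*} [NormedAddCommGroup X] [InnerProductSpace ℂ X] [CompleteSpace X]
    (νκ : ℝ) (hνκ : 0 < νκ)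
    (κ : ℝ → X →L[ℂ] X) (hκmeas : StronglyMeasurable κ)
    (hκcausal : ∀ s : ℝ, s < 0 → κ s = 0)
    (N : ℝ≥0∞)
    (hN : N ^ 2 = ∫⁻ s in Set.Ioi (0 : ℝ),
        (‖κ s‖₊ : ℝ≥0∞) ^ 2 * ENNReal.ofReal (Real.exp (2 * νκ * s)))
    (hN_fin : N ^ 2 < ⊤)
    (q : X → X) (C : ℝ) (hC : 0 < C)
    (hq : ∀ x y : X, ‖q x - q y‖ ≤ C * (‖x‖ + ‖y‖) * ‖x - y‖)
    (ν : ℝ) (hν0 : 0 < ν) (hν : ν ≤ νκ)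
    (u v : ℝ → X) (hu : StronglyMeasurable u) (hv : StronglyMeasurable v)
    (hu0 : ∀ t : ℝ, t < 0 → u t = 0) (hv0 : ∀ t : ℝ, t < 0 → v t = 0)
    (huf : (∫⁻ t : ℝ, (‖u t‖₊ : ℝ≥0∞) ^ 2 * ENNReal.ofReal (Real.exp (2 * ν * t))) < ⊤)
    (hvf : (∫⁻ t : ℝ, (‖v t‖₊ : ℝ≥0∞) ^ 2 * ENNReal.ofReal (Real.exp (2 * ν * t))) < ⊤) :
    (∫⁻ t : ℝ, (∫⁻ s : ℝ, (‖κ (t - s)‖₊ : ℝ≥0∞) * (‖q (u s) - q (v s)‖₊ : ℝ≥0∞)) ^ 2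
        * ENNReal.ofReal (Real.exp (2 * ν * t)))
      ≤ 2 * ENNReal.ofReal C ^ 2 * N ^ 2
        * ((∫⁻ t : ℝ, (‖u t‖₊ : ℝ≥0∞) ^ 2 * ENNReal.ofReal (Real.exp (2 * ν * t)))
              ^ (1 / 2 : ℝ)
            + (∫⁻ t : ℝ, (‖v t‖₊ : ℝ≥0∞) ^ 2 * ENNReal.ofReal (Real.exp (2 * ν * t)))
              ^ (1 / 2 : ℝ)) ^ 2
        * ∫⁻ t : ℝ, (‖u t - v t‖₊ : ℝ≥0∞) ^ 2 * ENNReal.ofReal (Real.exp (2 * ν * t)) := by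
  classical
  -- continuity of `q`
  have hq_cont : Continuous q := by
    rw [continuous_iff_continuousAt]
    intro x
    rw [ContinuousAt, tendsto_iff_norm_sub_tendsto_zero]
    have hcont : Continuous fun y : X => C * (‖y‖ + ‖x‖) * ‖y - x‖ := by continuity
    have hb : Filter.Tendsto (fun y : X => C * (‖y‖ + ‖x‖) * ‖y - x‖) (nhds x) (nhds 0) := by
      have h0 : C * (‖x‖ + ‖x‖) * ‖x - x‖ = 0 := by simp
      simpa [h0] using hcont.tendsto x
    exact squeeze_zero (fun y => norm_nonneg _) (fun y => hq y x) hb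
  -- measurability
  have hK : Measurable fun r : ℝ => (‖κ r‖₊ : ℝ≥0∞) := hκmeas.enorm
  have hU : Measurable fun s : ℝ => (‖u s‖₊ : ℝ≥0∞) := hu.enorm
  have hV : Measurable fun s : ℝ => (‖v s‖₊ : ℝ≥0∞) := hv.enorm
  have hW : Measurable fun s : ℝ => (‖u s - v s‖₊ : ℝ≥0∞) := (hu.sub hv).enorm
  have hQm : Measurable fun s : ℝ => (‖q (u s) - q (v s)‖₊ : ℝ≥0∞) :=
    ((hq_cont.comp_stronglyMeasurable hu).sub (hq_cont.comp_stronglyMeasurable hv)).enorm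
  -- pointwise quadratic Lipschitz bound, in `ℝ≥0∞`
  have hq' : ∀ s : ℝ, (‖q (u s) - q (v s)‖₊ : ℝ≥0∞)
      ≤ ENNReal.ofReal C * (((‖u s‖₊ : ℝ≥0∞) + (‖v s‖₊ : ℝ≥0∞)) * (‖u s - v s‖₊ : ℝ≥0∞)) := by
    intro s
    calc (‖q (u s) - q (v s)‖₊ : ℝ≥0∞) = ENNReal.ofReal ‖q (u s) - q (v s)‖ :=
          (ofReal_norm _).symm
      _ ≤ ENNReal.ofReal (C * ((‖u s‖ + ‖v s‖) * ‖u s - v s‖)) :=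
          ENNReal.ofReal_le_ofReal (by rw [← mul_assoc]; exact hq _ _)
      _ = ENNReal.ofReal C * (((‖u s‖₊ : ℝ≥0∞) + (‖v s‖₊ : ℝ≥0∞)) * (‖u s - v s‖₊ : ℝ≥0∞)) := by
          rw [ENNReal.ofReal_mul hC.le, ENNReal.ofReal_mul (by positivity),
            ENNReal.ofReal_add (norm_nonneg _) (norm_nonneg _),
            ofReal_norm, ofReal_norm, ofReal_norm]
          rfl
  set Msq : ℝ≥0∞ := ∫⁻ s : ℝ, ((‖u s‖₊ : ℝ≥0∞) + (‖v s‖₊ : ℝ≥0∞)) ^ 2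
      * ENNReal.ofReal (Real.exp (2 * ν * s)) with hMsq
  -- the key pointwise-in-`t` estimate
  have key : ∀ t : ℝ,
      (∫⁻ s : ℝ, (‖κ (t - s)‖₊ : ℝ≥0∞) * (‖q (u s) - q (v s)‖₊ : ℝ≥0∞)) ^ 2
          * ENNReal.ofReal (Real.exp (2 * ν * t))
        ≤ ENNReal.ofReal C ^ 2 * Msq
          * ∫⁻ s : ℝ, ((‖κ (t - s)‖₊ : ℝ≥0∞) ^ 2 * ENNReal.ofReal (Real.exp (2 * νκ * (t - s))))
              * ((‖u s - v s‖₊ : ℝ≥0∞) ^ 2 * ENNReal.ofReal (Real.exp (2 * ν * s))) := by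
    intro t
    set a : ℝ → ℝ≥0∞ := fun s =>
      (‖κ (t - s)‖₊ : ℝ≥0∞) * ENNReal.ofReal (Real.exp (νκ * (t - s)))
        * ((‖u s - v s‖₊ : ℝ≥0∞) * ENNReal.ofReal (Real.exp (ν * s))) with ha
    set b : ℝ → ℝ≥0∞ := fun s =>
      (Set.Iic t).indicator (fun s => ((‖u s‖₊ : ℝ≥0∞) + (‖v s‖₊ : ℝ≥0∞))
        * ENNReal.ofReal (Real.exp (-(νκ * (t - s)) - ν * s))) s with hb
    have ham : AEMeasurable a := by
      refine Measurable.aemeasurable ?_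
      exact ((hK.comp (measurable_const.sub measurable_id)).mul
          (ENNReal.measurable_ofReal.comp (Real.measurable_exp.comp
            ((measurable_const.sub measurable_id).const_mul νκ)))).mul
        (hW.mul (ENNReal.measurable_ofReal.comp (Real.measurable_exp.comp
          (measurable_id.const_mul ν))))
    have hbm : AEMeasurable b := by
      refine Measurable.aemeasurable (Measurable.indicator ?_ measurableSet_Iic)
      exact (hU.add hV).mul (ENNReal.measurable_ofReal.comp (Real.measurable_exp.comp
        ((((measurable_const.sub measurable_id).const_mul νκ).neg).sub
          (measurable_id.const_mul ν))))
    have hab : ∀ s : ℝ, (‖κ (t - s)‖₊ : ℝ≥0∞)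
        * (((‖u s‖₊ : ℝ≥0∞) + (‖v s‖₊ : ℝ≥0∞)) * (‖u s - v s‖₊ : ℝ≥0∞)) = a s * b s := by
      intro s
      by_cases hst : s ≤ t
      · rw [ha, hb]
        simp only [Set.indicator_of_mem (Set.mem_Iic.2 hst)]
        calc (‖κ (t - s)‖₊ : ℝ≥0∞)
            * (((‖u s‖₊ : ℝ≥0∞) + (‖v s‖₊ : ℝ≥0∞)) * (‖u s - v s‖₊ : ℝ≥0∞))
            = (‖κ (t - s)‖₊ : ℝ≥0∞)
                * (((‖u s‖₊ : ℝ≥0∞) + (‖v s‖₊ : ℝ≥0∞)) * (‖u s - v s‖₊ : ℝ≥0∞))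
                * (ENNReal.ofReal (Real.exp (νκ * (t - s)))
                  * (ENNReal.ofReal (Real.exp (ν * s))
                    * ENNReal.ofReal (Real.exp (-(νκ * (t - s)) - ν * s)))) := by
              rw [Emul, Emul, show ν * s + (-(νκ * (t - s)) - ν * s) = -(νκ * (t - s)) by ring,
                show νκ * (t - s) + -(νκ * (t - s)) = 0 by ring, Real.exp_zero,
                ENNReal.ofReal_one, mul_one]
          _ = _ := by ring
      · have hκ0 : κ (t - s) = 0 := hκcausal _ (by linarith)
        rw [hb]
        simp [Set.indicator_of_notMem (by simpa using hst : s ∉ Set.Iic t), hκ0]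
    -- Step 1: pull out the constant and pass to `a * b`
    have step1 : (∫⁻ s : ℝ, (‖κ (t - s)‖₊ : ℝ≥0∞) * (‖q (u s) - q (v s)‖₊ : ℝ≥0∞))
        ≤ ENNReal.ofReal C * ∫⁻ s, a s * b s := by
      rw [← lintegral_const_mul' _ _ ENNReal.ofReal_ne_top]
      refine lintegral_mono fun s => ?_
      calc (‖κ (t - s)‖₊ : ℝ≥0∞) * (‖q (u s) - q (v s)‖₊ : ℝ≥0∞)
          ≤ (‖κ (t - s)‖₊ : ℝ≥0∞) * (ENNReal.ofReal C
              * (((‖u s‖₊ : ℝ≥0∞) + (‖v s‖₊ : ℝ≥0∞)) * (‖u s - v s‖₊ : ℝ≥0∞))) :=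
            mul_le_mul_right (hq' s) _
        _ = ENNReal.ofReal C * ((‖κ (t - s)‖₊ : ℝ≥0∞)
              * (((‖u s‖₊ : ℝ≥0∞) + (‖v s‖₊ : ℝ≥0∞)) * (‖u s - v s‖₊ : ℝ≥0∞))) := by ring
        _ = ENNReal.ofReal C * (a s * b s) := by rw [hab s]
    -- Step 2: Cauchy–Schwarz
    have step2 : (∫⁻ s, a s * b s) ^ 2 ≤ (∫⁻ s, a s ^ 2) * ∫⁻ s, b s ^ 2 := CS2 ham hbm
    -- Step 3: bound on `∫ b²`
    have step3 : (∫⁻ s, b s ^ 2) ≤ ENNReal.ofReal (Real.exp (-(2 * ν * t))) * Msq := by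
      have hpt : ∀ s : ℝ, b s ^ 2 ≤ ENNReal.ofReal (Real.exp (-(2 * ν * t)))
          * (((‖u s‖₊ : ℝ≥0∞) + (‖v s‖₊ : ℝ≥0∞)) ^ 2
            * ENNReal.ofReal (Real.exp (2 * ν * s))) := by
        intro s
        by_cases hst : s ≤ t
        · rw [hb]
          simp only [Set.indicator_of_mem (Set.mem_Iic.2 hst)]
          by_cases hs0 : 0 ≤ s
          · rw [mul_pow, Esq]
            have hexp : 2 * (-(νκ * (t - s)) - ν * s) ≤ -(2 * ν * t) + 2 * ν * s := by
              nlinarith [mul_le_mul_of_nonneg_right hν (sub_nonneg.2 hst), hν0.le, hs0]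
            calc ((‖u s‖₊ : ℝ≥0∞) + (‖v s‖₊ : ℝ≥0∞)) ^ 2
                * ENNReal.ofReal (Real.exp (2 * (-(νκ * (t - s)) - ν * s)))
                ≤ ((‖u s‖₊ : ℝ≥0∞) + (‖v s‖₊ : ℝ≥0∞)) ^ 2
                  * ENNReal.ofReal (Real.exp (-(2 * ν * t) + 2 * ν * s)) :=
                  mul_le_mul_right (Emono hexp) _
              _ = ENNReal.ofReal (Real.exp (-(2 * ν * t)))
                  * (((‖u s‖₊ : ℝ≥0∞) + (‖v s‖₊ : ℝ≥0∞)) ^ 2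
                    * ENNReal.ofReal (Real.exp (2 * ν * s))) := by rw [← Emul]; ring
          · push_neg at hs0
            simp [hu0 s hs0, hv0 s hs0]
        · rw [hb]
          simp [Set.indicator_of_notMem (by simpa using hst : s ∉ Set.Iic t)]
      calc (∫⁻ s, b s ^ 2) ≤ ∫⁻ s, ENNReal.ofReal (Real.exp (-(2 * ν * t)))
            * (((‖u s‖₊ : ℝ≥0∞) + (‖v s‖₊ : ℝ≥0∞)) ^ 2
              * ENNReal.ofReal (Real.exp (2 * ν * s))) := lintegral_mono hpt
        _ = ENNReal.ofReal (Real.exp (-(2 * ν * t))) * Msq :=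
            lintegral_const_mul' _ _ ENNReal.ofReal_ne_top
    -- Step 4: identify `∫ a²`
    have step4 : (∫⁻ s, a s ^ 2)
        = ∫⁻ s : ℝ, ((‖κ (t - s)‖₊ : ℝ≥0∞) ^ 2
            * ENNReal.ofReal (Real.exp (2 * νκ * (t - s))))
          * ((‖u s - v s‖₊ : ℝ≥0∞) ^ 2 * ENNReal.ofReal (Real.exp (2 * ν * s))) := by
      refine lintegral_congr fun s => ?_
      rw [ha]
      simp only
      rw [mul_pow, mul_pow, mul_pow, Esq, Esq,
        show (2:ℝ) * (νκ * (t - s)) = 2 * νκ * (t - s) by ring,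
        show (2:ℝ) * (ν * s) = 2 * ν * s by ring]
    -- combine
    calc (∫⁻ s : ℝ, (‖κ (t - s)‖₊ : ℝ≥0∞) * (‖q (u s) - q (v s)‖₊ : ℝ≥0∞)) ^ 2
        * ENNReal.ofReal (Real.exp (2 * ν * t))
        ≤ (ENNReal.ofReal C * ∫⁻ s, a s * b s) ^ 2
            * ENNReal.ofReal (Real.exp (2 * ν * t)) :=
          mul_le_mul_left (pow_le_pow_left₀ zero_le step1 2) _
      _ = ENNReal.ofReal C ^ 2 * ((∫⁻ s, a s * b s) ^ 2
            * ENNReal.ofReal (Real.exp (2 * ν * t))) := by ring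
      _ ≤ ENNReal.ofReal C ^ 2 * (((∫⁻ s, a s ^ 2) * ∫⁻ s, b s ^ 2)
            * ENNReal.ofReal (Real.exp (2 * ν * t))) :=
          mul_le_mul_right (mul_le_mul_left step2 _) _
      _ ≤ ENNReal.ofReal C ^ 2 * (((∫⁻ s, a s ^ 2)
            * (ENNReal.ofReal (Real.exp (-(2 * ν * t))) * Msq))
            * ENNReal.ofReal (Real.exp (2 * ν * t))) :=
          mul_le_mul_right (mul_le_mul_left (mul_le_mul_right step3 _) _) _
      _ = ENNReal.ofReal C ^ 2 * Msq * (∫⁻ s, a s ^ 2)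
            * (ENNReal.ofReal (Real.exp (-(2 * ν * t)))
              * ENNReal.ofReal (Real.exp (2 * ν * t))) := by ring
      _ = ENNReal.ofReal C ^ 2 * Msq * (∫⁻ s, a s ^ 2) := by
          rw [Emul, show -(2 * ν * t) + 2 * ν * t = 0 by ring, Real.exp_zero,
            ENNReal.ofReal_one, mul_one]
      _ = _ := by rw [step4]
  -- measurability of the double integrand
  have hFGmeas : Measurable (Function.uncurry fun (t s : ℝ) =>
      ((‖κ (t - s)‖₊ : ℝ≥0∞) ^ 2 * ENNReal.ofReal (Real.exp (2 * νκ * (t - s))))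
        * ((‖u s - v s‖₊ : ℝ≥0∞) ^ 2 * ENNReal.ofReal (Real.exp (2 * ν * s)))) := by
    have : Measurable fun p : ℝ × ℝ =>
        ((‖κ (p.1 - p.2)‖₊ : ℝ≥0∞) ^ 2
          * ENNReal.ofReal (Real.exp (2 * νκ * (p.1 - p.2))))
        * ((‖u p.2 - v p.2‖₊ : ℝ≥0∞) ^ 2 * ENNReal.ofReal (Real.exp (2 * ν * p.2))) := by
      refine Measurable.fun_mul (Measurable.fun_mul ?_ ?_) (Measurable.fun_mul ?_ ?_)
      · exact (hK.comp (measurable_fst.sub measurable_snd)).pow_const 2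
      · exact ENNReal.measurable_ofReal.comp (Real.measurable_exp.comp
          ((measurable_fst.sub measurable_snd).const_mul (2 * νκ)))
      · exact (hW.comp measurable_snd).pow_const 2
      · exact ENNReal.measurable_ofReal.comp (Real.measurable_exp.comp
          (measurable_snd.const_mul (2 * ν)))
    exact this
  -- the translated kernel integral equals `N²`
  have hNint : (∫⁻ r : ℝ, (‖κ r‖₊ : ℝ≥0∞) ^ 2
      * ENNReal.ofReal (Real.exp (2 * νκ * r))) = N ^ 2 := by
    rw [← lintegral_add_compl (fun r : ℝ => (‖κ r‖₊ : ℝ≥0∞) ^ 2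
      * ENNReal.ofReal (Real.exp (2 * νκ * r))) measurableSet_Ioi, ← hN]
    have hz : (∫⁻ r in (Set.Ioi (0:ℝ))ᶜ, (‖κ r‖₊ : ℝ≥0∞) ^ 2
        * ENNReal.ofReal (Real.exp (2 * νκ * r))) = 0 := by
      rw [Set.compl_Ioi]
      have h0 : (volume.restrict (Set.Iic (0:ℝ))) {(0:ℝ)} = 0 := by
        refine le_antisymm (le_trans (Measure.restrict_apply_le _ _) ?_) zero_le
        simp
      have hae : ∀ᵐ r ∂(volume.restrict (Set.Iic (0:ℝ))),
          (‖κ r‖₊ : ℝ≥0∞) ^ 2 * ENNReal.ofReal (Real.exp (2 * νκ * r)) = 0 := by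
        filter_upwards [ae_restrict_mem measurableSet_Iic,
          compl_mem_ae_iff.2 h0] with r hr hr0
        have : r < 0 := lt_of_le_of_ne hr (by simpa using hr0)
        simp [hκcausal r this]
      rw [lintegral_congr_ae hae, lintegral_zero]
    rw [hz, add_zero]
  -- Minkowski: `Msq ≤ (‖u‖ + ‖v‖)²`
  have hmk : Msq ≤ ((∫⁻ t : ℝ, (‖u t‖₊ : ℝ≥0∞) ^ 2
        * ENNReal.ofReal (Real.exp (2 * ν * t))) ^ (1 / 2 : ℝ)
      + (∫⁻ t : ℝ, (‖v t‖₊ : ℝ≥0∞) ^ 2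
        * ENNReal.ofReal (Real.exp (2 * ν * t))) ^ (1 / 2 : ℝ)) ^ 2 := by
    have hfm : AEMeasurable (fun s : ℝ => (‖u s‖₊ : ℝ≥0∞)
        * ENNReal.ofReal (Real.exp (ν * s))) :=
      (hU.mul (ENNReal.measurable_ofReal.comp (Real.measurable_exp.comp
        (measurable_id.const_mul ν)))).aemeasurable
    have hgm : AEMeasurable (fun s : ℝ => (‖v s‖₊ : ℝ≥0∞)
        * ENNReal.ofReal (Real.exp (ν * s))) :=
      (hV.mul (ENNReal.measurable_ofReal.comp (Real.measurable_exp.comp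
        (measurable_id.const_mul ν)))).aemeasurable
    have h := ENNReal.lintegral_Lp_add_le (p := (2:ℝ)) hfm hgm one_le_two
    simp only [Pi.add_apply, rpow_two_eq] at h
    have e1 : ∀ s : ℝ, ((‖u s‖₊ : ℝ≥0∞) * ENNReal.ofReal (Real.exp (ν * s))) ^ (2:ℕ)
        = (‖u s‖₊ : ℝ≥0∞) ^ 2 * ENNReal.ofReal (Real.exp (2 * ν * s)) := fun s => by
      rw [mul_pow, Esq, show (2:ℝ) * (ν * s) = 2 * ν * s by ring]
    have e2 : ∀ s : ℝ, ((‖v s‖₊ : ℝ≥0∞) * ENNReal.ofReal (Real.exp (ν * s))) ^ (2:ℕ)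
        = (‖v s‖₊ : ℝ≥0∞) ^ 2 * ENNReal.ofReal (Real.exp (2 * ν * s)) := fun s => by
      rw [mul_pow, Esq, show (2:ℝ) * (ν * s) = 2 * ν * s by ring]
    have e3 : ∀ s : ℝ, ((‖u s‖₊ : ℝ≥0∞) * ENNReal.ofReal (Real.exp (ν * s))
          + (‖v s‖₊ : ℝ≥0∞) * ENNReal.ofReal (Real.exp (ν * s))) ^ (2:ℕ)
        = ((‖u s‖₊ : ℝ≥0∞) + (‖v s‖₊ : ℝ≥0∞)) ^ 2
          * ENNReal.ofReal (Real.exp (2 * ν * s)) := fun s => by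
      rw [← add_mul, mul_pow, Esq, show (2:ℝ) * (ν * s) = 2 * ν * s by ring]
    rw [lintegral_congr e3, lintegral_congr e1, lintegral_congr e2] at h
    calc Msq = (Msq ^ ((1:ℝ)/2)) ^ (2:ℕ) := (sq_half_rpow Msq).symm
      _ ≤ _ := by
          refine pow_le_pow_left₀ zero_le ?_ 2
          rw [hMsq]
          exact h
  -- put everything together
  calc (∫⁻ t : ℝ, (∫⁻ s : ℝ, (‖κ (t - s)‖₊ : ℝ≥0∞) * (‖q (u s) - q (v s)‖₊ : ℝ≥0∞)) ^ 2
        * ENNReal.ofReal (Real.exp (2 * ν * t)))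
      ≤ ∫⁻ t : ℝ, ENNReal.ofReal C ^ 2 * Msq
          * ∫⁻ s : ℝ, ((‖κ (t - s)‖₊ : ℝ≥0∞) ^ 2
              * ENNReal.ofReal (Real.exp (2 * νκ * (t - s))))
            * ((‖u s - v s‖₊ : ℝ≥0∞) ^ 2 * ENNReal.ofReal (Real.exp (2 * ν * s))) :=
        lintegral_mono fun t => key t
    _ = ENNReal.ofReal C ^ 2 * Msq * ∫⁻ t : ℝ, ∫⁻ s : ℝ,
          ((‖κ (t - s)‖₊ : ℝ≥0∞) ^ 2 * ENNReal.ofReal (Real.exp (2 * νκ * (t - s))))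
          * ((‖u s - v s‖₊ : ℝ≥0∞) ^ 2 * ENNReal.ofReal (Real.exp (2 * ν * s))) :=
        lintegral_const_mul _ hFGmeas.lintegral_prod_right
    _ = ENNReal.ofReal C ^ 2 * Msq * ∫⁻ s : ℝ, ∫⁻ t : ℝ,
          ((‖κ (t - s)‖₊ : ℝ≥0∞) ^ 2 * ENNReal.ofReal (Real.exp (2 * νκ * (t - s))))
          * ((‖u s - v s‖₊ : ℝ≥0∞) ^ 2 * ENNReal.ofReal (Real.exp (2 * ν * s))) := by
        rw [lintegral_lintegral_swap hFGmeas.aemeasurable]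
    _ = ENNReal.ofReal C ^ 2 * Msq * ∫⁻ s : ℝ,
          N ^ 2 * ((‖u s - v s‖₊ : ℝ≥0∞) ^ 2 * ENNReal.ofReal (Real.exp (2 * ν * s))) := by
        congr 1
        refine lintegral_congr fun s => ?_
        rw [lintegral_mul_const' _ _ (by
          exact ENNReal.mul_ne_top (ENNReal.pow_ne_top ENNReal.coe_ne_top)
            ENNReal.ofReal_ne_top),
          lintegral_sub_right_eq_self (fun r : ℝ => (‖κ r‖₊ : ℝ≥0∞) ^ 2
            * ENNReal.ofReal (Real.exp (2 * νκ * r))) s, hNint, mul_comm]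
    _ = ENNReal.ofReal C ^ 2 * Msq * (N ^ 2
          * ∫⁻ s : ℝ, (‖u s - v s‖₊ : ℝ≥0∞) ^ 2
            * ENNReal.ofReal (Real.exp (2 * ν * s))) := by
        rw [lintegral_const_mul' _ _ hN_fin.ne]
    _ ≤ ENNReal.ofReal C ^ 2
          * ((∫⁻ t : ℝ, (‖u t‖₊ : ℝ≥0∞) ^ 2
              * ENNReal.ofReal (Real.exp (2 * ν * t))) ^ (1 / 2 : ℝ)
            + (∫⁻ t : ℝ, (‖v t‖₊ : ℝ≥0∞) ^ 2
              * ENNReal.ofReal (Real.exp (2 * ν * t))) ^ (1 / 2 : ℝ)) ^ 2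
          * (N ^ 2 * ∫⁻ s : ℝ, (‖u s - v s‖₊ : ℝ≥0∞) ^ 2
            * ENNReal.ofReal (Real.exp (2 * ν * s))) :=
        mul_le_mul_left (mul_le_mul_right hmk _) _
    _ ≤ _ := by
        rw [show (2 : ℝ≥0∞) * ENNReal.ofReal C ^ 2 * N ^ 2
            * ((∫⁻ t : ℝ, (‖u t‖₊ : ℝ≥0∞) ^ 2
                * ENNReal.ofReal (Real.exp (2 * ν * t))) ^ (1 / 2 : ℝ)
              + (∫⁻ t : ℝ, (‖v t‖₊ : ℝ≥0∞) ^ 2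
                * ENNReal.ofReal (Real.exp (2 * ν * t))) ^ (1 / 2 : ℝ)) ^ 2
            * ∫⁻ t : ℝ, (‖u t - v t‖₊ : ℝ≥0∞) ^ 2
                * ENNReal.ofReal (Real.exp (2 * ν * t))
          = 2 * (ENNReal.ofReal C ^ 2
            * ((∫⁻ t : ℝ, (‖u t‖₊ : ℝ≥0∞) ^ 2
                * ENNReal.ofReal (Real.exp (2 * ν * t))) ^ (1 / 2 : ℝ)
              + (∫⁻ t : ℝ, (‖v t‖₊ : ℝ≥0∞) ^ 2
                * ENNReal.ofReal (Real.exp (2 * ν * t))) ^ (1 / 2 : ℝ)) ^ 2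
            * (N ^ 2 * ∫⁻ s : ℝ, (‖u s - v s‖₊ : ℝ≥0∞) ^ 2
                * ENNReal.ofReal (Real.exp (2 * ν * s)))) by ring]
        exact le_mul_of_one_le_left zero_le one_le_two
end
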